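/- arXiv:1411.2672 — 10 statements merged into one kernel-verified Lean document; each statement's English description precedes it below -/
import Mathlib

section
/- Let b > 0 and let ρ : [0,b] → ℝ be continuous with ρ(0) ≤ 0. Suppose there exist constants ε > 0 and C > 0 such that for every t ∈ (0,b] with 0 < ρ(t) ≤ ε, the lower left Dini derivative D⁻ρ(t) := liminf_{h→0⁺} (ρ(t) − ρ(t−h))/h satisfies D⁻ρ(t) ≤ C ρ(t). Then ρ(b) ≤ 0. -/
open Filter

/-- The lower left Dini derivative `D⁻ρ(t) = liminf_{h→0⁺} (ρ(t) − ρ(t−h))/h`,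
as an extended real number. -/
noncomputable def lowerLeftDini (ρ : ℝ → ℝ) (t : ℝ) : EReal :=
  Filter.liminf (fun h : ℝ => (((ρ t - ρ (t - h)) / h : ℝ) : EReal))
    (nhdsWithin 0 (Set.Ioi 0))

/-- Key comparison lemma: if the lower left Dini derivative of a continuous
function is strictly below `K` on `(a, c]`, then `f c - f a ≤ K * (c - a)`. -/
lemma key_dini_lemma (f : ℝ → ℝ) (a c K : ℝ) (hac : a < c)
    (hf : ContinuousOn f (Set.Icc a c))
    (h : ∀ t ∈ Set.Ioc a c, lowerLeftDini f t < (K : EReal)) :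
    f c - f a ≤ K * (c - a) := by
  by_contra hcon
  push_neg at hcon
  set g : ℝ → ℝ := fun t => f t - K * t with hg
  have hgc : ContinuousOn g (Set.Icc a c) :=
    hf.sub ((continuous_const.mul continuous_id).continuousOn)
  have hgac : g a < g c := by simp only [hg]; nlinarith
  set A := {t | t ∈ Set.Icc a c ∧ g c ≤ g t} with hA
  have hAc : IsClosed A := by
    have : A = Set.Icc a c ∩ g ⁻¹' Set.Ici (g c) := by
      ext t; simp [hA, Set.mem_Ici, and_comm]
    rw [this]
    exact hgc.preimage_isClosed_of_isClosed isClosed_Icc isClosed_Ici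
  have hcA : c ∈ A := ⟨⟨hac.le, le_refl c⟩, le_refl _⟩
  have hAbdd : BddBelow A := ⟨a, fun t ht => ht.1.1⟩
  set u := sInf A with hu
  have huA : u ∈ A := hAc.csInf_mem ⟨c, hcA⟩ hAbdd
  have hau : a < u := by
    rcases (huA.1.1).eq_or_lt with h' | h'
    · exact absurd huA.2 (by rw [← h']; exact not_le.2 hgac)
    · exact h'
  have hlt : ∀ t ∈ Set.Ico a u, g t < g u := by
    intro t ht
    have h1 : t ∉ A := fun hmem => absurd (csInf_le hAbdd hmem) (not_le.2 ht.2)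
    have h2 : t ∈ Set.Icc a c := ⟨ht.1, le_trans ht.2.le huA.1.2⟩
    have h3 : ¬ (g c ≤ g t) := fun hle => h1 ⟨h2, hle⟩
    exact lt_of_lt_of_le (not_le.1 h3) huA.2
  have hev : ∀ᶠ h' in nhdsWithin (0:ℝ) (Set.Ioi 0),
      (fun _ : ℝ => (K : EReal)) h' ≤ (((f u - f (u - h')) / h' : ℝ) : EReal) := by
    filter_upwards [Ioo_mem_nhdsGT_of_mem (show (0:ℝ) ∈ Set.Ico 0 (u - a) from
      ⟨le_refl 0, by linarith⟩)] with h' hh'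
    have h'pos : 0 < h' := hh'.1
    have hmem : u - h' ∈ Set.Ico a u := ⟨by linarith [hh'.2], by linarith⟩
    have hglt := hlt _ hmem
    have hq : K ≤ (f u - f (u - h')) / h' := by
      rw [le_div_iff₀ h'pos]
      simp only [hg] at hglt
      nlinarith
    exact_mod_cast hq
  have hK : (K : EReal) ≤ lowerLeftDini f u := by
    have hle := Filter.liminf_le_liminf hev
    rw [Filter.liminf_const] at hle
    exact hle
  exact absurd (h u ⟨hau, huA.1.2⟩) (not_lt.2 hK)

theorem dini_lower_left_comparison
    (b : ℝ) (hb : 0 < b) (ρ : ℝ → ℝ)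
    (hcont : ContinuousOn ρ (Set.Icc 0 b)) (h0 : ρ 0 ≤ 0)
    (ε C : ℝ) (hε : 0 < ε) (hC : 0 < C)
    (hdini : ∀ t ∈ Set.Ioc (0 : ℝ) b, 0 < ρ t → ρ t ≤ ε →
      lowerLeftDini ρ t ≤ ((C * ρ t : ℝ) : EReal)) :
    ρ b ≤ 0 := by
  by_contra hρb
  push_neg at hρb
  set m := min ε (ρ b) with hm
  have hm0 : 0 < m := lt_min hε hρb
  have hmε : m ≤ ε := min_le_left _ _
  have hmb : m ≤ ρ b := min_le_right _ _
  -- the last time ρ is nonpositive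
  set B := {t | t ∈ Set.Icc (0:ℝ) b ∧ ρ t ≤ 0} with hB
  have hBc : IsClosed B := by
    have : B = Set.Icc 0 b ∩ ρ ⁻¹' Set.Iic 0 := by
      ext t; simp [hB, Set.mem_Iic, and_comm]
    rw [this]
    exact hcont.preimage_isClosed_of_isClosed isClosed_Icc isClosed_Iic
  have hB0 : (0:ℝ) ∈ B := ⟨⟨le_refl 0, hb.le⟩, h0⟩
  have hBbdd : BddAbove B := ⟨b, fun t ht => ht.1.2⟩
  set t₀ := sSup B with ht₀
  have ht₀B : t₀ ∈ B := hBc.csSup_mem ⟨0, hB0⟩ hBbdd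
  have ht₀0 : 0 ≤ t₀ := ht₀B.1.1
  have ht₀b : t₀ ≤ b := ht₀B.1.2
  have hρt₀ : ρ t₀ ≤ 0 := ht₀B.2
  have hpos : ∀ t, t₀ < t → t ≤ b → 0 < ρ t := by
    intro t h1 h2
    by_contra hc
    push_neg at hc
    have htB : t ∈ B := ⟨⟨le_trans ht₀0 h1.le, h2⟩, hc⟩
    exact absurd (le_csSup hBbdd htB) (not_le.2 h1)
  -- first hitting times of the levels m / 2^k
  set A := fun k : ℕ => {t | t ∈ Set.Icc t₀ b ∧ m / 2^k ≤ ρ t} with hA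
  have hAc : ∀ k, IsClosed (A k) := by
    intro k
    have : A k = Set.Icc t₀ b ∩ ρ ⁻¹' Set.Ici (m / 2^k) := by
      ext t; simp [hA, Set.mem_Ici, and_comm]
    rw [this]
    exact (hcont.mono (Set.Icc_subset_Icc ht₀0 le_rfl)).preimage_isClosed_of_isClosed
      isClosed_Icc isClosed_Ici
  have hmk : ∀ k : ℕ, m / 2^k ≤ m := fun k => div_le_self hm0.le (one_le_pow₀ one_le_two)
  have hAne : ∀ k, b ∈ A k := fun k => ⟨⟨ht₀b, le_refl b⟩, le_trans (hmk k) hmb⟩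
  have hAbdd : ∀ k, BddBelow (A k) := fun k => ⟨t₀, fun t ht => ht.1.1⟩
  set u := fun k : ℕ => sInf (A k) with hud
  have huA : ∀ k, u k ∈ A k := fun k => (hAc k).csInf_mem ⟨b, hAne k⟩ (hAbdd k)
  have hut₀ : ∀ k, t₀ ≤ u k := fun k => (huA k).1.1
  have hub : ∀ k, u k ≤ b := fun k => (huA k).1.2
  have hlvlpos : ∀ k : ℕ, (0:ℝ) < m / 2^k := fun k => by positivity
  have hρuk : ∀ k, m / 2^k ≤ ρ (u k) := fun k => (huA k).2
  have ht₀u : ∀ k, t₀ < u k := by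
    intro k
    rcases (hut₀ k).eq_or_lt with h' | h'
    · exfalso
      have h1 := hρuk k
      rw [← h'] at h1
      linarith [hlvlpos k]
    · exact h'
  have hlt : ∀ k, ∀ t ∈ Set.Ico t₀ (u k), ρ t < m / 2^k := by
    intro k t ht
    by_contra hc
    push_neg at hc
    have : t ∈ A k := ⟨⟨ht.1, le_trans ht.2.le (hub k)⟩, hc⟩
    exact absurd (csInf_le (hAbdd k) this) (not_le.2 ht.2)
  -- continuity from the left gives ρ (u k) ≤ m / 2^k
  have hule : ∀ k, ρ (u k) ≤ m / 2^k := by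
    intro k
    have hsub : Set.Ico t₀ (u k) ⊆ Set.Icc 0 b := fun t ht =>
      ⟨le_trans ht₀0 ht.1, le_trans ht.2.le (hub k)⟩
    have hmemIcc : u k ∈ Set.Icc (0:ℝ) b := ⟨le_trans ht₀0 (hut₀ k), hub k⟩
    have hne : (nhdsWithin (u k) (Set.Ico t₀ (u k))).NeBot := by
      rw [← mem_closure_iff_nhdsWithin_neBot, closure_Ico (ht₀u k).ne]
      exact ⟨(ht₀u k).le, le_refl _⟩
    have htend : Tendsto ρ (nhdsWithin (u k) (Set.Ico t₀ (u k))) (nhds (ρ (u k))) :=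
      (hcont (u k) hmemIcc).mono hsub
    refine le_of_tendsto htend ?_
    filter_upwards [self_mem_nhdsWithin] with t ht
    exact (hlt k t ht).le
  -- each level takes at least 1/(4C) time
  have hgap : ∀ k : ℕ, u (k+1) + 1/(4*C) ≤ u k := by
    intro k
    have hmono : u (k+1) ≤ u k := by
      apply csInf_le_csInf (hAbdd (k+1)) ⟨b, hAne k⟩
      intro t ht
      refine ⟨ht.1, le_trans ?_ ht.2⟩
      apply div_le_div_of_nonneg_left hm0.le (by positivity)
      exact pow_le_pow_right₀ one_le_two (Nat.le_succ k)
    have hstrict : u (k+1) < u k := by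
      rcases hmono.eq_or_lt with h' | h'
      · exfalso
        have h1 := hρuk k
        have h2 := hule (k+1)
        rw [h'] at h2
        have : m / 2^k ≤ m / 2^(k+1) := le_trans h1 h2
        have h3 : m / 2^(k+1) < m / 2^k :=
          div_lt_div_of_pos_left hm0 (by positivity)
            (pow_lt_pow_right₀ one_lt_two (Nat.lt_succ_self k))
        linarith
      · exact h'
    -- apply the key lemma with K = 2 C (m / 2^k)
    have hkey : ρ (u k) - ρ (u (k+1)) ≤ (2 * C * (m / 2^k)) * (u k - u (k+1)) := by
      apply key_dini_lemma ρ (u (k+1)) (u k) _ hstrict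
      · exact hcont.mono (Set.Icc_subset_Icc (le_trans ht₀0 (hut₀ (k+1))) (hub k))
      · intro t ht
        have htb : t ≤ b := le_trans ht.2 (hub k)
        have ht₀t : t₀ < t := lt_of_le_of_lt (hut₀ (k+1)) ht.1
        have hρpos : 0 < ρ t := hpos t ht₀t htb
        have hρle : ρ t ≤ m / 2^k := by
          rcases ht.2.eq_or_lt with h' | h'
          · rw [h']; exact hule k
          · exact (hlt k t ⟨ht₀t.le, h'⟩).le
        have hρε : ρ t ≤ ε := le_trans hρle (le_trans (hmk k) hmε)
        have h1 : lowerLeftDini ρ t ≤ ((C * ρ t : ℝ) : EReal) :=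
          hdini t ⟨lt_of_le_of_lt ht₀0 ht₀t, htb⟩ hρpos hρε
        refine lt_of_le_of_lt h1 ?_
        rw [EReal.coe_lt_coe_iff]
        have : C * ρ t ≤ C * (m / 2^k) := mul_le_mul_of_nonneg_left hρle hC.le
        nlinarith [hlvlpos k]
    have hhalf : m / 2^(k+1) = (m / 2^k) / 2 := by
      rw [pow_succ, ← div_div]
    have h2' : ρ (u (k+1)) ≤ (m / 2^k) / 2 := by
      rw [← hhalf]; exact hule (k+1)
    have hdiff : (m / 2^k) / 2 ≤ ρ (u k) - ρ (u (k+1)) := by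
      have h1 := hρuk k
      linarith
    have hL := hlvlpos k
    have hd : 1/(4*C) ≤ u k - u (k+1) := by
      rw [div_le_iff₀ (by positivity)]
      nlinarith
    linarith
  -- iterate: u k ≤ b - k/(4C)
  have hiter : ∀ k : ℕ, u k + (k : ℝ) * (1/(4*C)) ≤ b := by
    intro k
    induction k with
    | zero => simpa using hub 0
    | succ n ih =>
      have := hgap n
      push_cast
      push_cast at ih
      linarith
  obtain ⟨N, hN⟩ := exists_nat_gt (4*C*b)
  have h1 := hiter N
  have h2 : (0:ℝ) ≤ u N := le_trans ht₀0 (hut₀ N)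
  have h3 : (N : ℝ) * (1/(4*C)) ≤ b := by linarith
  rw [mul_one_div, div_le_iff₀ (by positivity)] at h3
  linarith
end

section
/- Let b > 0 and let ρ : [0,b] → ℝ be continuous with ρ(0) ≤ 0. Suppose there exist constants ε > 0 and C > 0 such that for every t ∈ [0,b) with 0 < ρ(t) ≤ ε, the upper right Dini derivative D⁺ρ(t) := limsup_{h→0⁺} (ρ(t+h) − ρ(t))/h satisfies D⁺ρ(t) ≤ C ρ(t). Then ρ(b) ≤ 0. -/
open Filter

/-- The upper right Dini derivative `D⁺ρ(t) = limsup_{h→0⁺} (ρ(t+h) − ρ(t))/h`,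
as an extended real number. -/
noncomputable def upperRightDini (ρ : ℝ → ℝ) (t : ℝ) : EReal :=
  Filter.limsup (fun h : ℝ => (((ρ (t + h) - ρ t) / h : ℝ) : EReal))
    (nhdsWithin 0 (Set.Ioi 0))

/-!
Suppose `ρ b > 0` and let `s` be the last point of `[0, b]` where `ρ ≤ 0`. Just to the right
of `s`, `ρ` lies in `(0, ε]`, so `D⁺ρ ≤ C ρ` there and Gronwall's inequality gives
`ρ t ≤ ρ a · exp (C (t - a))` for `s < a < t`. Letting `a → s` yields
`ρ t ≤ ρ s · exp (C (t - s)) ≤ 0`, contradicting `ρ t > 0`.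
-/

open Set Topology Real

lemma tendsto_sub_nhdsGT_zero (x : ℝ) : Tendsto (· - x) (𝓝[>] x) (𝓝[>] 0) :=
  tendsto_nhdsWithin_of_tendsto_nhds_of_eventually_within _
    ((continuous_sub_right x).tendsto' x 0 (sub_self x) |>.mono_left nhdsWithin_le_nhds)
    (eventually_nhdsWithin_of_forall fun _ hz => mem_Ioi.2 (sub_pos.2 hz))

lemma frequently_slope_lt_of_upperRightDini_lt {ρ : ℝ → ℝ} {x r : ℝ}
    (h : upperRightDini ρ x < r) : ∃ᶠ z in 𝓝[>] x, slope ρ x z < r := by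
  refine ((tendsto_sub_nhdsGT_zero x).eventually (eventually_lt_of_limsup_lt h) |>.mono
    fun z hz => ?_).frequently
  rw [EReal.coe_lt_coe_iff, add_sub_cancel] at hz
  rwa [slope_def_field]

lemma le_mul_exp_of_upperRightDini_le {ρ : ℝ → ℝ} {a c C : ℝ}
    (hρ : ContinuousOn ρ (Icc a c))
    (hdini : ∀ x ∈ Ico a c, upperRightDini ρ x ≤ ((C * ρ x : ℝ) : EReal)) :
    ∀ x ∈ Icc a c, ρ x ≤ ρ a * exp (C * (x - a)) := by
  intro x hx
  rw [← gronwallBound_ε0]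
  refine le_gronwallBound_of_liminf_deriv_right_le (f' := fun x => C * ρ x) hρ
    (fun y hy r hr => ?_) le_rfl (fun y _ => (add_zero _).ge) x hx
  simpa only [slope_def_module, smul_eq_mul] using
    frequently_slope_lt_of_upperRightDini_lt ((hdini y hy).trans_lt (EReal.coe_lt_coe_iff.2 hr))

lemma le_mul_exp_of_upperRightDini_le_on_Ioo {ρ : ℝ → ℝ} {a c C : ℝ} (hac : a < c)
    (hρ : ContinuousOn ρ (Icc a c))
    (hdini : ∀ x ∈ Ioo a c, upperRightDini ρ x ≤ ((C * ρ x : ℝ) : EReal)) :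
    ρ c ≤ ρ a * exp (C * (c - a)) := by
  have hbound : ∀ a' ∈ Ioo a c, ρ c ≤ ρ a' * exp (C * (c - a')) := fun a' ha' =>
    le_mul_exp_of_upperRightDini_le (hρ.mono (Icc_subset_Icc ha'.1.le le_rfl))
      (fun x hx => hdini x ⟨ha'.1.trans_le hx.1, hx.2⟩) c ⟨ha'.2.le, le_rfl⟩
  have hlim : Tendsto (fun a' => ρ a' * exp (C * (c - a'))) (𝓝[Ioo a c] a)
      (𝓝 (ρ a * exp (C * (c - a)))) :=
    have hexp : Continuous fun a' => exp (C * (c - a')) := by fun_prop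
    ((hρ a ⟨le_rfl, hac.le⟩).mul hexp.continuousWithinAt).mono Ioo_subset_Icc_self
  have := left_nhdsWithin_Ioo_neBot hac
  exact ge_of_tendsto hlim (eventually_nhdsWithin_of_forall hbound)

lemma ContinuousOn.exists_nonpos_forall_pos_Ioc {ρ : ℝ → ℝ} {a b : ℝ} (hab : a ≤ b)
    (hρ : ContinuousOn ρ (Icc a b)) (ha : ρ a ≤ 0) :
    ∃ s ∈ Icc a b, ρ s ≤ 0 ∧ ∀ t ∈ Ioc s b, 0 < ρ t := by
  have hcompact : IsCompact (Icc a b ∩ ρ ⁻¹' Iic 0) :=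
    isCompact_Icc.of_isClosed_subset
      (hρ.preimage_isClosed_of_isClosed isClosed_Icc isClosed_Iic) inter_subset_left
  obtain ⟨s, ⟨hs, hρs⟩, hmax⟩ := hcompact.exists_isGreatest ⟨a, ⟨le_rfl, hab⟩, ha⟩
  refine ⟨s, hs, hρs, fun t ht => ?_⟩
  by_contra! hρt
  exact ht.1.not_ge (hmax ⟨⟨hs.1.trans ht.1.le, ht.2⟩, hρt⟩)

theorem dini_upper_right_comparison_general
    (b : ℝ) (hb : 0 < b) (ρ : ℝ → ℝ)
    (hcont : ContinuousOn ρ (Set.Icc 0 b)) (h0 : ρ 0 ≤ 0)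
    (ε C : ℝ) (hε : 0 < ε)
    (hdini : ∀ t ∈ Set.Ico (0 : ℝ) b, 0 < ρ t → ρ t ≤ ε →
      upperRightDini ρ t ≤ ((C * ρ t : ℝ) : EReal)) :
    ρ b ≤ 0 := by
  by_contra! hρb
  obtain ⟨s, ⟨hs0, hsb⟩, hρs, hpos⟩ := hcont.exists_nonpos_forall_pos_Ioc hb.le h0
  have hsb' : s < b := hsb.lt_of_ne (by rintro rfl; linarith)
  have hnear : ∀ᶠ x in 𝓝[>] s, ρ x ≤ ε :=
    ((hcont s ⟨hs0, hsb⟩).mono_of_mem_nhdsWithin (mem_of_superset (Ioo_mem_nhdsGT hsb')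
      fun _ hx => ⟨hs0.trans hx.1.le, hx.2.le⟩)).eventually_le_const (hρs.trans_lt hε)
  obtain ⟨t, ⟨hst, htb⟩, hsmall⟩ := (mem_nhdsGT_iff_exists_mem_Ioc_Ioo_subset hsb').1 hnear
  have hgrowth :=
    le_mul_exp_of_upperRightDini_le_on_Ioo hst (hcont.mono (Icc_subset_Icc hs0 htb)) fun x hx =>
      hdini x ⟨hs0.trans hx.1.le, hx.2.trans_le htb⟩ (hpos x ⟨hx.1, hx.2.le.trans htb⟩)
      (hsmall hx)
  have hbound_nonpos := mul_nonpos_of_nonpos_of_nonneg hρs (exp_pos (C * (t - s))).le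
  linarith [hpos t ⟨hst, htb⟩]

theorem dini_upper_right_comparison
    (b : ℝ) (hb : 0 < b) (ρ : ℝ → ℝ)
    (hcont : ContinuousOn ρ (Set.Icc 0 b)) (h0 : ρ 0 ≤ 0)
    (ε C : ℝ) (hε : 0 < ε) (hC : 0 < C)
    (hdini : ∀ t ∈ Set.Ico (0 : ℝ) b, 0 < ρ t → ρ t ≤ ε →
      upperRightDini ρ t ≤ ((C * ρ t : ℝ) : EReal)) :
    ρ b ≤ 0 :=
  dini_upper_right_comparison_general b hb ρ hcont h0 ε C hε hdini
end

section
/- Let n ≥ 2 be an integer and k > 0. Let I ⊆ ℝ be an open interval, let u : I → ℝ be a continuous positive viscosity supersolution of −ψ''ψ = (n−1)(k + (ψ'/(n−1))²) on I, and let φ : I → ℝ be a positive C² function satisfying −φ''(β)φ(β) = (n−1)(k + (φ'(β)/(n−1))²) for all β ∈ I. Then the function u − φ does not attain a negative local minimum at any point of I; that is, there is no β₀ ∈ I with u(β₀) − φ(β₀) < 0 and u(β) − φ(β) ≥ u(β₀) − φ(β₀) for all β in a neighborhood of β₀. -/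
open Filter

/-- `u` is a viscosity supersolution of `−ψ''ψ = (n−1)(k + (ψ'/(n−1))²)` on `I`:
for every `β₀ ∈ I` and every `C²` test function `ψ` with `ψ ≤ u` near `β₀` (within `I`)
and `ψ(β₀) = u(β₀)`, one has `−ψ''(β₀)ψ(β₀) ≥ (n−1)(k + (ψ'(β₀)/(n−1))²)`. -/
def IsViscositySupersolution2 (n : ℕ) (k : ℝ) (I : Set ℝ) (u : ℝ → ℝ) : Prop :=
  ∀ β₀ ∈ I, ∀ ψ : ℝ → ℝ, ContDiffAt ℝ 2 ψ β₀ →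
    (∀ᶠ β in nhdsWithin β₀ I, ψ β ≤ u β) → ψ β₀ = u β₀ →
    -(deriv (deriv ψ) β₀) * ψ β₀ ≥ ((n : ℝ) - 1) * (k + (deriv ψ β₀ / ((n : ℝ) - 1)) ^ 2)

theorem no_negative_local_min_of_difference
    (n : ℕ) (hn : 2 ≤ n) (k : ℝ) (hk : 0 < k)
    (I : Set ℝ) (hIopen : IsOpen I) (hIconn : I.OrdConnected)
    (u φ : ℝ → ℝ)
    (hu_cont : ContinuousOn u I) (hu_pos : ∀ β ∈ I, 0 < u β)
    (hu_visc : IsViscositySupersolution2 n k I u)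
    (hφ_pos : ∀ β ∈ I, 0 < φ β)
    (hφ_C2 : ∀ β ∈ I, ContDiffAt ℝ 2 φ β)
    (hφ_eq : ∀ β ∈ I, -(deriv (deriv φ) β) * φ β
      = ((n : ℝ) - 1) * (k + (deriv φ β / ((n : ℝ) - 1)) ^ 2)) :
    ¬ ∃ β₀ ∈ I, u β₀ - φ β₀ < 0 ∧
      ∀ᶠ β in nhdsWithin β₀ I, u β₀ - φ β₀ ≤ u β - φ β := by
  rintro ⟨β₀, hβ₀, hneg, hmin⟩
  set c := u β₀ - φ β₀ with hc
  set ψ : ℝ → ℝ := fun β => φ β + c with hψ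
  have hC2 : ContDiffAt ℝ 2 ψ β₀ := (hφ_C2 β₀ hβ₀).add contDiffAt_const
  have hle : ∀ᶠ β in nhdsWithin β₀ I, ψ β ≤ u β := by
    filter_upwards [hmin] with β hβ
    simp only [hψ]
    linarith
  have heq : ψ β₀ = u β₀ := by simp [hψ, hc]
  have h := hu_visc β₀ hβ₀ ψ hC2 hle heq
  have hd : deriv ψ = deriv φ := by
    funext x
    exact deriv_add_const c
  rw [hd] at h
  have hrhs : 0 < ((n : ℝ) - 1) * (k + (deriv φ β₀ / ((n : ℝ) - 1)) ^ 2) := by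
    have hn1 : (1 : ℝ) ≤ (n : ℝ) - 1 := by
      have : (2 : ℝ) ≤ (n : ℝ) := by exact_mod_cast hn
      linarith
    nlinarith [sq_nonneg (deriv φ β₀ / ((n : ℝ) - 1))]
  have heqφ := hφ_eq β₀ hβ₀
  have hφp := hφ_pos β₀ hβ₀
  have hdd : 0 < -(deriv (deriv φ) β₀) := by
    nlinarith
  have hψβ : ψ β₀ = φ β₀ + c := rfl
  rw [hψβ] at h
  nlinarith
end

section
/- Let n ≥ 2 be an integer and k > 0. Let u : (0,1) → ℝ be a continuous positive viscosity supersolution of −ψ''ψ = (n−1)(k + (ψ'/(n−1))²) on (0,1), and let φ : (0,1) → ℝ be a positive C² function satisfying −φ''(β)φ(β) = (n−1)(k + (φ'(β)/(n−1))²) for all β ∈ (0,1). If liminf_{β→0⁺} (u(β) − φ(β)) ≥ 0 and liminf_{β→1⁻} (u(β) − φ(β)) ≥ 0, then u(β) ≥ φ(β) for all β ∈ (0,1). -/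
open Filter

theorem viscosity_comparison_on_unit_interval
    (n : ℕ) (hn : 2 ≤ n) (k : ℝ) (hk : 0 < k)
    (u φ : ℝ → ℝ)
    (hu_cont : ContinuousOn u (Set.Ioo 0 1))
    (hu_pos : ∀ β ∈ Set.Ioo (0 : ℝ) 1, 0 < u β)
    (hu_visc : IsViscositySupersolution2 n k (Set.Ioo 0 1) u)
    (hφ_pos : ∀ β ∈ Set.Ioo (0 : ℝ) 1, 0 < φ β)
    (hφ_C2 : ∀ β ∈ Set.Ioo (0 : ℝ) 1, ContDiffAt ℝ 2 φ β)
    (hφ_eq : ∀ β ∈ Set.Ioo (0 : ℝ) 1, -(deriv (deriv φ) β) * φ β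
      = ((n : ℝ) - 1) * (k + (deriv φ β / ((n : ℝ) - 1)) ^ 2))
    (h0 : (0 : EReal) ≤ Filter.liminf (fun β => ((u β - φ β : ℝ) : EReal))
      (nhdsWithin 0 (Set.Ioo (0 : ℝ) 1)))
    (h1 : (0 : EReal) ≤ Filter.liminf (fun β => ((u β - φ β : ℝ) : EReal))
      (nhdsWithin 1 (Set.Ioo (0 : ℝ) 1))) :
    ∀ β ∈ Set.Ioo (0 : ℝ) 1, φ β ≤ u β := by
  by_contra hcon
  push_neg at hcon
  obtain ⟨β₁, hβ₁, hlt⟩ := hcon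
  set g : ℝ → ℝ := fun β => u β - φ β with hg
  set c : ℝ := φ β₁ - u β₁ with hc
  clear_value g c
  have hgdef : ∀ β, g β = u β - φ β := by intro β; rw [hg]
  have hcpos : 0 < c := by rw [hc]; linarith
  -- eventually bounds near the boundary
  have hlt0 : ((-(c/2) : ℝ) : EReal) < Filter.liminf (fun β => ((u β - φ β : ℝ) : EReal))
      (nhdsWithin 0 (Set.Ioo (0 : ℝ) 1)) := by
    refine lt_of_lt_of_le ?_ h0
    have : (-(c/2) : ℝ) < 0 := by linarith
    exact_mod_cast this
  have hlt1 : ((-(c/2) : ℝ) : EReal) < Filter.liminf (fun β => ((u β - φ β : ℝ) : EReal))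
      (nhdsWithin 1 (Set.Ioo (0 : ℝ) 1)) := by
    refine lt_of_lt_of_le ?_ h1
    have : (-(c/2) : ℝ) < 0 := by linarith
    exact_mod_cast this
  have hE0 : ∀ᶠ β in nhdsWithin 0 (Set.Ioo (0:ℝ) 1), -(c/2) < u β - φ β := by
    have := Filter.eventually_lt_of_lt_liminf hlt0
    filter_upwards [this] with β hβ
    exact_mod_cast hβ
  have hE1 : ∀ᶠ β in nhdsWithin 1 (Set.Ioo (0:ℝ) 1), -(c/2) < u β - φ β := by
    have := Filter.eventually_lt_of_lt_liminf hlt1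
    filter_upwards [this] with β hβ
    exact_mod_cast hβ
  obtain ⟨ε₀, hε₀, hball0⟩ := Metric.mem_nhdsWithin_iff.mp hE0
  obtain ⟨ε₁, hε₁, hball1⟩ := Metric.mem_nhdsWithin_iff.mp hE1
  set a : ℝ := min β₁ ε₀ with ha
  set b : ℝ := max β₁ (1 - ε₁) with hb
  have hapos : 0 < a := lt_min hβ₁.1 hε₀
  have hb1 : b < 1 := max_lt hβ₁.2 (by linarith)
  have hab : a ≤ b := le_trans (min_le_left _ _) (le_max_left _ _)
  have hIccsub : Set.Icc a b ⊆ Set.Ioo (0:ℝ) 1 := fun x hx =>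
    ⟨lt_of_lt_of_le hapos hx.1, lt_of_le_of_lt hx.2 hb1⟩
  have hβ₁mem : β₁ ∈ Set.Icc a b := ⟨min_le_left _ _, le_max_left _ _⟩
  -- continuity of g on [a,b]
  have hgcont : ContinuousOn g (Set.Icc a b) := by
    rw [hg]
    apply ContinuousOn.sub (hu_cont.mono hIccsub)
    intro x hx
    exact ((hφ_C2 x (hIccsub hx)).continuousAt.continuousWithinAt)
  obtain ⟨β₀, hβ₀mem, hβ₀min⟩ :=
    isCompact_Icc.exists_isMinOn ⟨β₁, hβ₁mem⟩ hgcont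
  have hβ₀Ioo : β₀ ∈ Set.Ioo (0:ℝ) 1 := hIccsub hβ₀mem
  set m : ℝ := g β₀ with hm
  have hmβ₁ : m ≤ -c := by
    have := hβ₀min hβ₁mem
    simpa [hm, hg, hc] using this
  -- global lower bound: g β₀ ≤ g β for all β ∈ Ioo 0 1
  have hglobal : ∀ β ∈ Set.Ioo (0:ℝ) 1, m ≤ g β := by
    intro β hβ
    by_cases hcase : β ∈ Set.Icc a b
    · exact hβ₀min hcase
    · have : β < a ∨ b < β := by
        by_contra h; push_neg at h
        exact hcase ⟨h.1, h.2⟩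
      have hbig : -(c/2) < g β := by
        rcases this with h | h
        · have : β ∈ Metric.ball (0:ℝ) ε₀ ∩ Set.Ioo 0 1 := by
            constructor
            · simp only [Metric.mem_ball, Real.dist_eq, sub_zero]
              rw [abs_of_pos hβ.1]
              exact lt_of_lt_of_le h (min_le_right _ _)
            · exact hβ
          have h2 := hball0 this
          rw [hgdef]; exact h2
        · have : β ∈ Metric.ball (1:ℝ) ε₁ ∩ Set.Ioo 0 1 := by
            constructor
            · simp only [Metric.mem_ball, Real.dist_eq]
              have h1β : 1 - ε₁ < β := lt_of_le_of_lt (le_max_right _ _) h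
              rw [abs_of_neg (by linarith [hβ.2] : β - 1 < 0)]
              linarith
            · exact hβ
          have h2 := hball1 this
          rw [hgdef]; exact h2
      linarith [hbig, hmβ₁, hcpos]
  -- apply viscosity supersolution with ψ = φ + m
  set ψ : ℝ → ℝ := fun β => φ β + m with hψ
  have hψC2 : ContDiffAt ℝ 2 ψ β₀ := (hφ_C2 β₀ hβ₀Ioo).add contDiffAt_const
  have hψle : ∀ᶠ β in nhdsWithin β₀ (Set.Ioo (0:ℝ) 1), ψ β ≤ u β := by
    filter_upwards [eventually_mem_nhdsWithin] with β hβ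
    have := hglobal β hβ
    simp only [hψ, hg] at this ⊢
    linarith
  have hψeq : ψ β₀ = u β₀ := by simp [hψ, hm, hg]
  have hvisc := hu_visc β₀ hβ₀Ioo ψ hψC2 hψle hψeq
  have hd1 : deriv ψ = deriv φ := by
    funext x
    simp [hψ, deriv_add_const]
  have hd2 : deriv (deriv ψ) β₀ = deriv (deriv φ) β₀ := by rw [hd1]
  rw [hd2, hd1] at hvisc
  have heq := hφ_eq β₀ hβ₀Ioo
  -- RHS is positive
  have hn1 : (1:ℝ) ≤ (n:ℝ) - 1 := by
    have : (2:ℝ) ≤ (n:ℝ) := by exact_mod_cast hn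
    linarith
  have hRpos : 0 < ((n : ℝ) - 1) * (k + (deriv φ β₀ / ((n : ℝ) - 1)) ^ 2) := by
    apply mul_pos (by linarith)
    positivity
  have hφβ₀pos : 0 < φ β₀ := hφ_pos β₀ hβ₀Ioo
  have hddneg : 0 < -(deriv (deriv φ) β₀) := by
    nlinarith [heq]
  have hψval : ψ β₀ = φ β₀ + m := rfl
  rw [hψval] at hvisc
  -- from hvisc and heq : -φ'' * m ≥ 0, so m ≥ 0, contradicting m ≤ -c < 0
  nlinarith [hvisc, heq, hddneg, hmβ₁, hcpos]
end

section
/- Let n ≥ 2 be an integer and k > 0. Let I ⊆ ℝ be an open interval, let u : I → ℝ be a continuous positive viscosity supersolution of −ψ''ψ = (n−1)(k + (ψ'/(n−1))²) on I, and let φ : I → ℝ be a positive C² function satisfying −φ''(β)φ(β) = (n−1)(k + (φ'(β)/(n−1))²) for all β ∈ I. Then the ratio u/φ cannot attain a local minimum value strictly less than 1 at any interior point: there is no β₀ ∈ I with u(β₀)/φ(β₀) < 1 and u(β)/φ(β) ≥ u(β₀)/φ(β₀) for all β in a neighborhood of β₀. -/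
open Filter

theorem no_local_min_of_ratio_below_one
    (n : ℕ) (hn : 2 ≤ n) (k : ℝ) (hk : 0 < k)
    (I : Set ℝ) (hIopen : IsOpen I) (hIconn : I.OrdConnected)
    (u φ : ℝ → ℝ)
    (hu_cont : ContinuousOn u I) (hu_pos : ∀ β ∈ I, 0 < u β)
    (hu_visc : IsViscositySupersolution2 n k I u)
    (hφ_pos : ∀ β ∈ I, 0 < φ β)
    (hφ_C2 : ∀ β ∈ I, ContDiffAt ℝ 2 φ β)
    (hφ_eq : ∀ β ∈ I, -(deriv (deriv φ) β) * φ β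
      = ((n : ℝ) - 1) * (k + (deriv φ β / ((n : ℝ) - 1)) ^ 2)) :
    ¬ ∃ β₀ ∈ I, u β₀ / φ β₀ < 1 ∧
      ∀ᶠ β in nhdsWithin β₀ I, u β₀ / φ β₀ ≤ u β / φ β := by
  rintro ⟨β₀, hβ₀, hc1, hmin⟩
  set c : ℝ := u β₀ / φ β₀ with hc
  have hφ₀ := hφ_pos β₀ hβ₀
  have hu₀ := hu_pos β₀ hβ₀
  have hcpos : 0 < c := div_pos hu₀ hφ₀
  set ψ : ℝ → ℝ := fun β => c * φ β with hψ
  have hψC2 : ContDiffAt ℝ 2 ψ β₀ := contDiffAt_const.mul (hφ_C2 β₀ hβ₀)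
  have hle : ∀ᶠ β in nhdsWithin β₀ I, ψ β ≤ u β := by
    filter_upwards [hmin, self_mem_nhdsWithin] with β hβ hβI
    have hφβ := hφ_pos β hβI
    have := (le_div_iff₀ hφβ).mp hβ
    simpa [hψ, mul_comm] using this
  have hψ₀ : ψ β₀ = u β₀ := by
    simp only [hψ, hc]
    field_simp
  have hd1 : deriv ψ = fun β => c * deriv φ β := by
    funext β; simp [hψ, deriv_const_mul_field]
  have hd2 : deriv (deriv ψ) β₀ = c * deriv (deriv φ) β₀ := by
    rw [hd1, deriv_const_mul_field]
  have hineq := hu_visc β₀ hβ₀ ψ hψC2 hle hψ₀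
  have heq := hφ_eq β₀ hβ₀
  rw [hd2, hψ₀] at hineq
  have hψu : c * φ β₀ = u β₀ := by simpa [hψ] using hψ₀
  rw [hd1] at hineq
  simp only at hineq
  have hN : (0:ℝ) < (n:ℝ) - 1 := by
    have : (2:ℝ) ≤ (n:ℝ) := by exact_mod_cast hn
    linarith
  rw [← hψu] at hineq
  have hexp : (c * deriv φ β₀ / ((n:ℝ)-1))^2 = c^2 * (deriv φ β₀ / ((n:ℝ)-1))^2 := by
    field_simp
  rw [hexp] at hineq
  have key : (c^2 - 1) * (((n:ℝ)-1) * k) ≥ 0 := by nlinarith [hineq, heq]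
  have hc2 : c^2 < 1 := by nlinarith
  nlinarith [mul_pos hN hk]
end

section
/- Let n ≥ 2 be an integer and b > 0. Let u : (0,b) → ℝ be a continuous positive viscosity supersolution of −ψ''ψ = (n−1)(1 + (ψ'/(n−1))²) on (0,b), and let φ : (0,b) → ℝ be a positive C² function satisfying −φ''(β)φ(β) = (n−1)(1 + (φ'(β)/(n−1))²) for all β ∈ (0,b). Assume u(β) ≤ φ(β) for all β ∈ (0,b) and lim_{β→0⁺} u(β)/φ(β) = 1. Then the function β ↦ u(β)/φ(β) is monotone non-increasing on (0,b). -/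
open Filter

/-!
If the ratio `u / φ` increased somewhere, pick a level `c ∈ (0, 1)` strictly between two of its
values. Since `u / φ → 1` at `0`, the function `u - c φ` is positive at a point close to `0` and
at the right point, but negative at the left one, so it has a negative interior minimum `m`.
Then `c φ + m` touches `u` from below, and the supersolution inequality for this test function
contradicts the equation for `φ`: scaling a solution by `c ≤ 1` and shifting it down turns it
into a strict subsolution.
-/

open Set Topology

lemma exists_mem_Ioo_lt_of_tendsto {g : ℝ → ℝ} {b β l c : ℝ} (hβ : β ∈ Ioo 0 b)
    (hg : Tendsto g (𝓝[Ioo 0 b] 0) (𝓝 l)) (hc : c < l) : ∃ a ∈ Ioo 0 β, c < g a := by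
  rw [nhdsWithin_Ioo_eq_nhdsGT (hβ.1.trans hβ.2)] at hg
  exact ((show ∀ᶠ a in 𝓝[>] (0 : ℝ), a ∈ Ioo 0 β from Ioo_mem_nhdsGT hβ.1).and
    (hg.eventually (lt_mem_nhds hc))).exists

lemma exists_mem_Ioo_isLocalMin_le {f : ℝ → ℝ} {a b x : ℝ} (hf : ContinuousOn f (Icc a b))
    (hx : x ∈ Icc a b) (ha : f x < f a) (hb : f x < f b) :
    ∃ y ∈ Ioo a b, IsLocalMin f y ∧ f y ≤ f x := by
  obtain ⟨y, hy, hmin⟩ := isCompact_Icc.exists_isMinOn_mem_subset (s := Ioo a b) hf hx <| by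
    simp only [Icc_sdiff_Ioo_same (hx.1.trans hx.2), forall_mem_insert, mem_singleton_iff,
      forall_eq]
    exact ⟨ha, hb⟩
  exact ⟨y, hy, hmin.isLocalMin (Icc_mem_nhds hy.1 hy.2), isMinOn_iff.1 hmin x hx⟩

lemma const_mul_add_strict_subsolution {N k φ₀ φ₁ φ₂ c m : ℝ} (hN : 0 < N) (hk : 0 < k)
    (hφ₀ : 0 < φ₀) (hφ : -φ₂ * φ₀ = N * (k + (φ₁ / N) ^ 2))
    (hc₀ : 0 < c) (hc₁ : c ≤ 1) (hm : m < 0) :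
    -(c * φ₂) * (c * φ₀ + m) < N * (k + (c * φ₁ / N) ^ 2) := by
  have hφ₂ : 0 < -φ₂ := by
    have : 0 < -φ₂ * φ₀ := by rw [hφ]; positivity
    exact pos_of_mul_pos_left this hφ₀.le
  have hscale : (c * φ₁ / N) ^ 2 = c ^ 2 * (φ₁ / N) ^ 2 := by ring
  rw [hscale]
  nlinarith [mul_pos (mul_pos hc₀ hφ₂) (neg_pos.2 hm), sq_nonneg (φ₁ / N),
    mul_nonneg (mul_nonneg hN.le hk.le) (sub_nonneg.2 (pow_le_one₀ hc₀.le hc₁ (n := 2)))]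

namespace IsViscositySupersolution2

variable {n : ℕ} {k : ℝ} {I : Set ℝ} {u : ℝ → ℝ}

theorem ge_of_isLocalMinOn_sub (hu : IsViscositySupersolution2 n k I u) {g : ℝ → ℝ} {β₀ : ℝ}
    (hβ₀ : β₀ ∈ I) (hg : ContDiffAt ℝ 2 g β₀) (hmin : IsLocalMinOn (fun x => u x - g x) I β₀) :
    -(deriv (deriv g) β₀) * u β₀ ≥ ((n : ℝ) - 1) * (k + (deriv g β₀ / ((n : ℝ) - 1)) ^ 2) := by
  have hderiv : deriv (fun x => g x + (u β₀ - g β₀)) = deriv g := deriv_add_const' _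
  have h := hu β₀ hβ₀ (fun x => g x + (u β₀ - g β₀)) (hg.add contDiffAt_const)
    (hmin.mono fun x hx => by linarith) (by ring)
  rwa [hderiv, add_sub_cancel] at h

theorem const_mul_le_of_isLocalMinOn (hu : IsViscositySupersolution2 n k I u) (hn : 2 ≤ n)
    (hk : 0 < k) {φ : ℝ → ℝ} {c β₀ : ℝ} (hβ₀ : β₀ ∈ I) (hφ : ContDiffAt ℝ 2 φ β₀)
    (hφ_pos : 0 < φ β₀) (hφ_eq : -(deriv (deriv φ) β₀) * φ β₀
      = ((n : ℝ) - 1) * (k + (deriv φ β₀ / ((n : ℝ) - 1)) ^ 2))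
    (hc₀ : 0 < c) (hc₁ : c ≤ 1) (hmin : IsLocalMinOn (fun x => u x - c * φ x) I β₀) :
    c * φ β₀ ≤ u β₀ := by
  by_contra! hlt
  have hN : (0 : ℝ) < (n : ℝ) - 1 := by
    have : (2 : ℝ) ≤ n := by exact_mod_cast hn
    linarith
  have h := hu.ge_of_isLocalMinOn_sub hβ₀ (contDiffAt_const.mul hφ) hmin
  rw [deriv_const_mul_field', deriv_const_mul_field'] at h
  have hu₀ : u β₀ = c * φ β₀ + (u β₀ - c * φ β₀) := by ring
  rw [hu₀] at h
  exact (const_mul_add_strict_subsolution hN hk hφ_pos hφ_eq hc₀ hc₁ (by linarith)).not_ge h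

end IsViscositySupersolution2

theorem ratio_monotone_nonincreasing_general
    (n : ℕ) (hn : 2 ≤ n) (b : ℝ)
    (u φ : ℝ → ℝ)
    (hu_cont : ContinuousOn u (Set.Ioo 0 b))
    (hu_pos : ∀ β ∈ Set.Ioo (0 : ℝ) b, 0 < u β)
    (hu_visc : IsViscositySupersolution2 n 1 (Set.Ioo 0 b) u)
    (hφ_pos : ∀ β ∈ Set.Ioo (0 : ℝ) b, 0 < φ β)
    (hφ_C2 : ∀ β ∈ Set.Ioo (0 : ℝ) b, ContDiffAt ℝ 2 φ β)
    (hφ_eq : ∀ β ∈ Set.Ioo (0 : ℝ) b, -(deriv (deriv φ) β) * φ β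
      = ((n : ℝ) - 1) * (1 + (deriv φ β / ((n : ℝ) - 1)) ^ 2))
    (hle : ∀ β ∈ Set.Ioo (0 : ℝ) b, u β ≤ φ β)
    (hlim : Filter.Tendsto (fun β => u β / φ β)
      (nhdsWithin 0 (Set.Ioo (0 : ℝ) b)) (nhds 1)) :
    AntitoneOn (fun β => u β / φ β) (Set.Ioo 0 b) := by
  intro β₁ hβ₁ β₂ hβ₂ h12
  by_contra! hcon
  obtain ⟨c, hc₁, hc₂⟩ := exists_between hcon
  have hc_pos : 0 < c := (div_pos (hu_pos β₁ hβ₁) (hφ_pos β₁ hβ₁)).trans hc₁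
  have hc_lt_one : c < 1 := hc₂.trans_le ((div_le_one (hφ_pos β₂ hβ₂)).2 (hle β₂ hβ₂))
  have hpos_iff : ∀ x ∈ Ioo 0 b, 0 < u x - c * φ x ↔ c < u x / φ x := fun x hx => by
    rw [sub_pos, lt_div_iff₀ (hφ_pos x hx)]
  have hβ₁_neg : u β₁ - c * φ β₁ < 0 := by rwa [sub_neg, ← div_lt_iff₀ (hφ_pos β₁ hβ₁)]
  obtain ⟨a, ha, hca⟩ := exists_mem_Ioo_lt_of_tendsto hβ₁ hlim hc_lt_one
  have hsub : Icc a β₂ ⊆ Ioo 0 b := Icc_subset_Ioo ha.1 hβ₂.2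
  have hcont : ContinuousOn (fun x => u x - c * φ x) (Icc a β₂) :=
    (hu_cont.mono hsub).sub (continuousOn_const.mul fun x hx =>
      (hφ_C2 x (hsub hx)).continuousAt.continuousWithinAt)
  obtain ⟨β₀, hβ₀, hmin, hβ₀_neg⟩ := exists_mem_Ioo_isLocalMin_le hcont ⟨ha.2.le, h12⟩
    (hβ₁_neg.trans ((hpos_iff a ⟨ha.1, ha.2.trans hβ₁.2⟩).2 hca))
    (hβ₁_neg.trans ((hpos_iff β₂ hβ₂).2 hc₂))
  have hβ₀I := hsub (Ioo_subset_Icc_self hβ₀)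
  have hge := hu_visc.const_mul_le_of_isLocalMinOn hn one_pos hβ₀I (hφ_C2 β₀ hβ₀I)
    (hφ_pos β₀ hβ₀I) (hφ_eq β₀ hβ₀I) hc_pos hc_lt_one.le (hmin.on _)
  linarith

theorem ratio_monotone_nonincreasing
    (n : ℕ) (hn : 2 ≤ n) (b : ℝ) (hb : 0 < b)
    (u φ : ℝ → ℝ)
    (hu_cont : ContinuousOn u (Set.Ioo 0 b))
    (hu_pos : ∀ β ∈ Set.Ioo (0 : ℝ) b, 0 < u β)
    (hu_visc : IsViscositySupersolution2 n 1 (Set.Ioo 0 b) u)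
    (hφ_pos : ∀ β ∈ Set.Ioo (0 : ℝ) b, 0 < φ β)
    (hφ_C2 : ∀ β ∈ Set.Ioo (0 : ℝ) b, ContDiffAt ℝ 2 φ β)
    (hφ_eq : ∀ β ∈ Set.Ioo (0 : ℝ) b, -(deriv (deriv φ) β) * φ β
      = ((n : ℝ) - 1) * (1 + (deriv φ β / ((n : ℝ) - 1)) ^ 2))
    (hle : ∀ β ∈ Set.Ioo (0 : ℝ) b, u β ≤ φ β)
    (hlim : Filter.Tendsto (fun β => u β / φ β)
      (nhdsWithin 0 (Set.Ioo (0 : ℝ) b)) (nhds 1)) :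
    AntitoneOn (fun β => u β / φ β) (Set.Ioo 0 b) :=
  ratio_monotone_nonincreasing_general n hn b u φ hu_cont hu_pos hu_visc hφ_pos hφ_C2 hφ_eq hle hlim
end

section
/- Let n ≥ 2 be an integer, let 0 < d ≤ π, and let a ∈ ℝ. Then ∫_a^{a+d} (max(cos t, 0))^{n−1} dt ≤ ∫_{−d/2}^{d/2} (cos t)^{n−1} dt. -/
open Real intervalIntegral

private lemma cosP_anti {x y : ℝ} (hx : x ≤ Real.pi + Real.pi / 2) (h : |y| ≤ x) :
    max (Real.cos x) 0 ≤ max (Real.cos y) 0 := by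
  rcases le_or_gt (Real.pi / 2) x with hx2 | hx2
  · have hcx : Real.cos x ≤ 0 := Real.cos_nonpos_of_pi_div_two_le_of_le hx2 hx
    have : max (Real.cos x) 0 = 0 := max_eq_right hcx
    rw [this]
    exact le_max_right _ _
  · have hy : |y| < Real.pi / 2 := lt_of_le_of_lt h hx2
    have h1 : Real.cos x ≤ Real.cos |y| := by
      apply Real.cos_le_cos_of_nonneg_of_le_pi (abs_nonneg y) ?_ h
      linarith [Real.pi_pos]
    rw [Real.cos_abs] at h1
    exact max_le_max h1 le_rfl

private lemma key_center (m : ℕ) (d : ℝ) (hd : 0 < d) (hdπ : d ≤ Real.pi) (c : ℝ)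
    (hc0 : 0 ≤ c) (hcπ : c ≤ Real.pi) :
    (∫ t in (c - d / 2)..(c + d / 2), (max (Real.cos t) 0) ^ m) ≤
      ∫ t in (-(d / 2))..(d / 2), (max (Real.cos t) 0) ^ m := by
  set f : ℝ → ℝ := fun t => (max (Real.cos t) 0) ^ m with hf
  have hcont : Continuous f := (Real.continuous_cos.max continuous_const).pow m
  have hint : ∀ a b : ℝ, IntervalIntegrable f MeasureTheory.volume a b :=
    fun a b => hcont.intervalIntegrable a b
  have h1 : (∫ t in (c - d / 2)..(c + d / 2), f t) - ∫ t in (-(d / 2))..(d / 2), f t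
      = (∫ t in (d / 2)..(c + d / 2), f t) - ∫ t in (-(d / 2))..(c - d / 2), f t := by
    rw [← intervalIntegral.integral_add_adjacent_intervals (hint (c - d / 2) (d / 2))
        (hint (d / 2) (c + d / 2)),
        ← intervalIntegral.integral_add_adjacent_intervals (hint (-(d / 2)) (c - d / 2))
        (hint (c - d / 2) (d / 2))]
    ring
  have h2 : (∫ t in (d / 2)..(c + d / 2), f t) = ∫ u in (0:ℝ)..c, f (u + d / 2) := by
    rw [intervalIntegral.integral_comp_add_right]
    norm_num
  have h3 : (∫ t in (-(d / 2))..(c - d / 2), f t) = ∫ u in (0:ℝ)..c, f (u - d / 2) := by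
    rw [intervalIntegral.integral_comp_sub_right]
    norm_num
  have h4 : (∫ u in (0:ℝ)..c, f (u + d / 2)) ≤ ∫ u in (0:ℝ)..c, f (u - d / 2) := by
    apply intervalIntegral.integral_mono_on hc0
      ((hcont.comp (by continuity)).intervalIntegrable _ _)
      ((hcont.comp (by continuity)).intervalIntegrable _ _)
    intro u hu
    have hu0 : 0 ≤ u := hu.1
    have huc : u ≤ c := hu.2
    simp only [hf]
    apply pow_le_pow_left₀ (le_max_right _ _) ?_ m
    apply cosP_anti
    · linarith
    · rw [abs_le]
      constructor <;> linarith
  linarith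

theorem integral_cos_pos_part_pow_le
    (n : ℕ) (hn : 2 ≤ n) (d : ℝ) (hd : 0 < d) (hdπ : d ≤ Real.pi) (a : ℝ) :
    ∫ t in a..(a + d), (max (Real.cos t) 0) ^ (n - 1) ≤
      ∫ t in (-(d / 2))..(d / 2), (Real.cos t) ^ (n - 1) := by
  set m := n - 1 with hm
  set f : ℝ → ℝ := fun t => (max (Real.cos t) 0) ^ m with hf
  have hπ := Real.pi_pos
  -- RHS rewrite: on [-(d/2), d/2], cos is nonneg
  have hrhs : (∫ t in (-(d / 2))..(d / 2), (Real.cos t) ^ m)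
      = ∫ t in (-(d / 2))..(d / 2), f t := by
    apply intervalIntegral.integral_congr
    intro t ht
    rw [Set.uIcc_of_le (by linarith)] at ht
    have h1 : -(Real.pi / 2) ≤ t := by have := ht.1; linarith
    have h2 : t ≤ Real.pi / 2 := by have := ht.2; linarith
    have : 0 ≤ Real.cos t := Real.cos_nonneg_of_mem_Icc ⟨h1, h2⟩
    simp [hf, max_eq_left this]
  rw [hrhs]
  set c : ℝ := a + d / 2 with hc
  set k : ℤ := round (c / (2 * Real.pi)) with hk
  set c₀ : ℝ := c - k * (2 * Real.pi) with hc₀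
  have habs : |c₀| ≤ Real.pi := by
    have h := abs_sub_round (c / (2 * Real.pi))
    have h2π : (0:ℝ) < 2 * Real.pi := by linarith
    have hc₀' : c₀ = 2 * Real.pi * (c / (2 * Real.pi) - k) := by
      field_simp [hc₀]
      ring
    have : |c₀| = 2 * Real.pi * |c / (2 * Real.pi) - k| := by
      rw [hc₀', abs_mul, abs_of_pos h2π]
    rw [this]
    calc 2 * Real.pi * |c / (2 * Real.pi) - ↑k| ≤ 2 * Real.pi * (1 / 2) := by
          apply mul_le_mul_of_nonneg_left h (le_of_lt h2π)
      _ = Real.pi := by ring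
  -- periodicity: shift by k * 2π
  have hper : (∫ t in a..(a + d), f t) = ∫ t in (c₀ - d / 2)..(c₀ + d / 2), f t := by
    have h1 : (∫ t in (c₀ - d / 2)..(c₀ + d / 2), f (t + k * (2 * Real.pi)))
        = ∫ t in (c₀ - d / 2 + k * (2 * Real.pi))..(c₀ + d / 2 + k * (2 * Real.pi)), f t :=
      intervalIntegral.integral_comp_add_right f _
    have heq : ∀ t : ℝ, f (t + k * (2 * Real.pi)) = f t := by
      intro t
      simp [hf, Real.cos_add_int_mul_two_pi]
    simp only [heq] at h1
    rw [h1]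
    congr 1 <;> simp only [hc₀, hc] <;> ring
  rw [hper]
  -- evenness reduction
  have heven : ∀ c' : ℝ, (∫ t in (c' - d / 2)..(c' + d / 2), f t)
      = ∫ t in (-c' - d / 2)..(-c' + d / 2), f t := by
    intro c'
    have h1 : (∫ t in (-c' - d / 2)..(-c' + d / 2), f (-t))
        = ∫ t in (-(-c' + d / 2))..(-(-c' - d / 2)), f t :=
      intervalIntegral.integral_comp_neg f
    have heq : ∀ t : ℝ, f (-t) = f t := by
      intro t; simp [hf, Real.cos_neg]
    simp only [heq] at h1
    rw [show (-(-c' + d / 2)) = c' - d / 2 by ring,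
        show (-(-c' - d / 2)) = c' + d / 2 by ring] at h1
    exact h1.symm
  rcases le_or_gt 0 c₀ with h0 | h0
  · exact key_center m d hd hdπ c₀ h0 (by rw [abs_le] at habs; exact habs.2)
  · rw [show c₀ - d / 2 = -(-c₀) - d/2 by ring, show c₀ + d / 2 = -(-c₀) + d/2 by ring,
      ← heven (-c₀)]
    exact key_center m d hd hdπ (-c₀) (by linarith)
      (by rw [abs_le] at habs; linarith [habs.1])
end

section
/- Let n ≥ 2 be an integer, let 0 < d ≤ π, let H ∈ ℝ, r₀ ∈ ℝ and ψ > 0. If 1 ≤ ψ · ∫_{r₀−d}^{r₀} (max(cos t − H sin t, 0))^{n−1} dt, then ψ (1 + H²)^{(n−1)/2} ≥ ( ∫_{−d/2}^{d/2} (cos t)^{n−1} dt )^{−1}. -/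
/-!
Since `cos t - H sin t = √(1 + H²) cos (t + arctan H)`, the hypothesis reads
`1 ≤ ψ √(1 + H²)^(n-1) J`, where `J` is the integral of `f = (cos⁺)^(n-1)` over some window of
length `d`. As a function of the window's centre `a` this integral is even and `2π`-periodic, and
its derivative `f (a + d/2) - f (a - d/2)` is nonpositive for `a ∈ [0, π]` because `d ≤ π`; so the
centred window, on which `cos⁺ = cos`, maximises it.
-/

open Real intervalIntegral Set

noncomputable def centredIntegral (f : ℝ → ℝ) (b a : ℝ) : ℝ :=
  ∫ t in (a - b)..(a + b), f t

section CentredIntegral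

variable {f : ℝ → ℝ}

theorem Function.Even.centredIntegral (hf : f.Even) (b : ℝ) : (centredIntegral f b).Even := by
  intro a
  have hflip : ∫ t in (a - b)..(a + b), f t = ∫ t in (a - b)..(a + b), f (-t) := by
    simp only [hf _]
  show ∫ t in (-a - b)..(-a + b), f t = ∫ t in (a - b)..(a + b), f t
  rw [hflip, integral_comp_neg]
  congr 1 <;> ring

theorem Function.Periodic.centredIntegral {T : ℝ} (hf : f.Periodic T) (b : ℝ) :
    (centredIntegral f b).Periodic T := by
  intro a
  show ∫ t in (a + T - b)..(a + T + b), f t = ∫ t in (a - b)..(a + b), f t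
  rw [show a + T - b = a - b + T by ring, show a + T + b = a + b + T by ring,
    ← integral_comp_add_right]
  simp only [hf _]

theorem hasDerivAt_centredIntegral (hf : Continuous f) (b a : ℝ) :
    HasDerivAt (centredIntegral f b) (f (a + b) - f (a - b)) a := by
  have hF (u : ℝ) : HasDerivAt (fun u => ∫ t in (0 : ℝ)..u, f t) (f u) u :=
    (hf.integral_hasStrictDerivAt 0 u).hasDerivAt
  have hsplit : centredIntegral f b =
      fun a => (∫ t in (0 : ℝ)..(a + b), f t) - ∫ t in (0 : ℝ)..(a - b), f t := by
    funext a
    exact (integral_interval_sub_left (hf.intervalIntegrable _ _) (hf.intervalIntegrable _ _)).symm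
  rw [hsplit]
  exact ((hF _).comp_add_const a b).sub ((hF _).comp_sub_const a b)

end CentredIntegral

theorem Function.Periodic.apply_le_apply_zero {α β : Type*} [Field α] [LinearOrder α]
    [IsStrictOrderedRing α] [Archimedean α] [Preorder β] {G : α → β} {T : α}
    (hper : G.Periodic T) (hT : 0 < T) (heven : G.Even) (hanti : AntitoneOn G (Icc 0 (T / 2)))
    (a : α) : G a ≤ G 0 := by
  obtain ⟨y, ⟨hy₁, hy₂⟩, hGy⟩ := hper.exists_mem_Ico hT a (-(T / 2))
  have habs : G |y| = G y := by
    rcases abs_choice y with h | h <;> simp only [h, heven y]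
  rw [hGy, ← habs]
  exact hanti ⟨le_rfl, by linarith⟩ ⟨abs_nonneg y, abs_le.2 ⟨by linarith, by linarith⟩⟩
    (abs_nonneg y)

theorem max_cos_add_le_max_cos_sub {a b : ℝ} (ha : 0 ≤ a) (hb : 0 ≤ b) (hab : a + b ≤ π + π / 2) :
    max (cos (a + b)) 0 ≤ max (cos (a - b)) 0 := by
  rcases le_or_gt (cos (a + b)) 0 with hc | hc
  · rw [max_eq_right hc]
    exact le_max_right _ _
  have hlt : a + b < π / 2 := by
    by_contra! hge
    exact (cos_nonpos_of_pi_div_two_le_of_le hge hab).not_gt hc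
  refine max_le_max ?_ le_rfl
  rw [← cos_abs (a - b)]
  exact cos_le_cos_of_nonneg_of_le_pi (abs_nonneg _) (by linarith)
    (abs_le.2 ⟨by linarith, by linarith⟩)

theorem centredIntegral_max_cos_pow_le (m : ℕ) {b : ℝ} (hb : 0 ≤ b) (hbπ : b ≤ π / 2) (a : ℝ) :
    centredIntegral (fun t => max (cos t) 0 ^ m) b a ≤
      centredIntegral (fun t => max (cos t) 0 ^ m) b 0 := by
  set g : ℝ → ℝ := fun t => max (cos t) 0 ^ m
  have hg : Continuous g := by fun_prop
  have heven : g.Even := fun t => by simp only [g, cos_neg]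
  have hper : g.Periodic (2 * π) := fun t => by simp only [g, cos_add_two_pi]
  have hanti : AntitoneOn (centredIntegral g b) (Icc 0 π) := by
    refine antitoneOn_of_hasDerivWithinAt_nonpos (convex_Icc 0 π)
      (fun x _ => (hasDerivAt_centredIntegral hg b x).continuousAt.continuousWithinAt)
      (fun x _ => (hasDerivAt_centredIntegral hg b x).hasDerivWithinAt) fun x hx => ?_
    rw [interior_Icc] at hx
    exact sub_nonpos.2 <| pow_le_pow_left₀ (le_max_right _ _)
      (max_cos_add_le_max_cos_sub hx.1.le hb (by linarith [hx.2])) m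
  refine (hper.centredIntegral b).apply_le_apply_zero two_pi_pos (heven.centredIntegral b) ?_ a
  rwa [mul_div_cancel_left₀ π two_ne_zero]

theorem centredIntegral_max_cos_pow_zero (m : ℕ) {b : ℝ} (hb : 0 ≤ b) (hbπ : b ≤ π / 2) :
    centredIntegral (fun t => max (cos t) 0 ^ m) b 0 = ∫ t in (-b)..b, cos t ^ m := by
  rw [centredIntegral, zero_sub, zero_add]
  refine integral_congr fun t ht => ?_
  rw [uIcc_of_le (by linarith)] at ht
  have hcos : 0 ≤ cos t := cos_nonneg_of_mem_Icc ⟨by linarith [ht.1], by linarith [ht.2]⟩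
  simp only [max_eq_left hcos]

theorem integral_cos_pow_pos (m : ℕ) {b : ℝ} (hb : 0 < b) (hbπ : b ≤ π / 2) :
    0 < ∫ t in (-b)..b, cos t ^ m :=
  intervalIntegral_pos_of_pos_on ((continuous_cos.pow m).intervalIntegrable _ _)
    (fun _ ht => pow_pos (cos_pos_of_mem_Ioo ⟨by linarith [ht.1], by linarith [ht.2]⟩) m)
    (by linarith)

theorem cos_sub_mul_sin (H t : ℝ) : cos t - H * sin t = √(1 + H ^ 2) * cos (t + arctan H) := by
  rw [cos_add, cos_arctan, sin_arctan]
  field_simp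

theorem integral_max_cos_sub_mul_sin_pow (H a b : ℝ) (m : ℕ) :
    ∫ t in a..b, max (cos t - H * sin t) 0 ^ m =
      √(1 + H ^ 2) ^ m * ∫ t in (a + arctan H)..(b + arctan H), max (cos t) 0 ^ m := by
  rw [← integral_comp_add_right (fun t => max (cos t) 0 ^ m), ← integral_const_mul]
  refine integral_congr fun t _ => ?_
  simp only [cos_sub_mul_sin, ← mul_pow, mul_max_of_nonneg _ _ (sqrt_nonneg _), mul_zero]

theorem heintze_karcher_consequence
    (n : ℕ) (hn : 2 ≤ n) (d H r₀ ψ : ℝ) (hd : 0 < d) (hdπ : d ≤ Real.pi) (hψ : 0 < ψ)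
    (h : 1 ≤ ψ * ∫ t in (r₀ - d)..r₀, (max (Real.cos t - H * Real.sin t) 0) ^ (n - 1)) :
    (∫ t in (-(d / 2))..(d / 2), (Real.cos t) ^ (n - 1))⁻¹ ≤
      ψ * (1 + H ^ 2) ^ (((n : ℝ) - 1) / 2) := by
  have hwindow := centredIntegral_max_cos_pow_le (n - 1) (half_pos hd).le (by linarith)
    (r₀ - d / 2 + arctan H)
  rw [centredIntegral_max_cos_pow_zero _ (half_pos hd).le (by linarith), centredIntegral,
    show r₀ - d / 2 + arctan H - d / 2 = r₀ - d + arctan H by ring,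
    show r₀ - d / 2 + arctan H + d / 2 = r₀ + arctan H by ring] at hwindow
  rw [integral_max_cos_sub_mul_sin_pow] at h
  have hpow : √(1 + H ^ 2) ^ (n - 1) = (1 + H ^ 2) ^ (((n : ℝ) - 1) / 2) := by
    rw [rpow_div_two_eq_sqrt _ (by positivity), ← Nat.cast_pred (by omega), rpow_natCast]
  rw [inv_le_iff_one_le_mul₀ (integral_cos_pow_pos _ (half_pos hd) (by linarith)), ← hpow]
  calc 1 ≤ ψ * (√(1 + H ^ 2) ^ (n - 1) *
        ∫ t in (r₀ - d + arctan H)..(r₀ + arctan H), max (cos t) 0 ^ (n - 1)) := h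
    _ ≤ ψ * (√(1 + H ^ 2) ^ (n - 1) * ∫ t in (-(d / 2))..(d / 2), cos t ^ (n - 1)) := by gcongr
    _ = _ := by ring
end

section
/- Let n ≥ 2 be an integer and c > 0. Define V(r) = c ∫₀^r (sin t)^{n−1} dt and A(r) = c (sin r)^{n−1} for r ∈ (0, π). Then V is a smooth, strictly increasing diffeomorphism from (0,π) onto (0, V(π)), and the function ψ = A ∘ V^{−1} : (0, V(π)) → ℝ is positive, twice continuously differentiable, and satisfies −ψ''(β)ψ(β) = (n−1)(1 + (ψ'(β)/(n−1))²) for all β ∈ (0, V(π)). -/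
open Real

lemma antideriv_sin_pow : ∀ m : ℕ, ∃ F : ℝ → ℝ, ContDiff ℝ (⊤ : ℕ∞) F ∧ ∀ r, HasDerivAt F (Real.sin r ^ m) r := by
  intro m
  induction m using Nat.strong_induction_on with
  | _ m ih =>
    match m, ih with
    | 0, _ => exact ⟨id, contDiff_id, fun r => by simpa using hasDerivAt_id r⟩
    | 1, _ => exact ⟨fun r => -Real.cos r, Real.contDiff_cos.neg, fun r => by
        rw [pow_one, ← neg_neg (Real.sin r)]; exact (Real.hasDerivAt_cos r).neg⟩
    | (m+2), ih =>
      obtain ⟨F, hF, hFd⟩ := ih m (by omega)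
      refine ⟨fun r => (m+2:ℝ)⁻¹ * (-(Real.cos r) * Real.sin r ^ (m+1)) + ((m+1:ℝ)/(m+2:ℝ)) * F r,
        (contDiff_const.mul ((Real.contDiff_cos.neg).mul (Real.contDiff_sin.pow _))).add
          (contDiff_const.mul hF), fun r => ?_⟩
      have h1 : HasDerivAt (fun r => -(Real.cos r) * Real.sin r ^ (m+1))
          (- -Real.sin r * (Real.sin r ^ (m+1)) + (-(Real.cos r)) * (((m+1:ℕ):ℝ) * Real.sin r ^ (m+1-1) * Real.cos r)) r :=
        (Real.hasDerivAt_cos r).neg.mul ((Real.hasDerivAt_sin r).pow _)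
      have h := ((h1.const_mul ((m+2:ℝ)⁻¹)).add ((hFd r).const_mul ((m+1:ℝ)/(m+2:ℝ))))
      refine h.congr_deriv ?_
      have hc2 : Real.cos r ^ 2 = 1 - Real.sin r ^ 2 := by
        have := Real.sin_sq_add_cos_sq r; linarith
      have h2 : (m+2:ℝ) ≠ 0 := by positivity
      simp only [Nat.add_sub_cancel]
      push_cast
      field_simp
      linear_combination (-(((m:ℝ)+1) * Real.sin r ^ m)) * hc2

theorem model_profile_is_solution
    (n : ℕ) (hn : 2 ≤ n) (c : ℝ) (hc : 0 < c)
    (V A ψ : ℝ → ℝ)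
    (hV : V = fun r => c * ∫ t in (0 : ℝ)..r, (Real.sin t) ^ (n - 1))
    (hA : A = fun r => c * (Real.sin r) ^ (n - 1))
    (hψ : ∀ r ∈ Set.Ioo (0 : ℝ) Real.pi, ψ (V r) = A r) :
    ContDiffOn ℝ (⊤ : ℕ∞) V (Set.Ioo 0 Real.pi) ∧
    StrictMonoOn V (Set.Ioo 0 Real.pi) ∧
    V '' Set.Ioo 0 Real.pi = Set.Ioo 0 (V Real.pi) ∧
    (∀ β ∈ Set.Ioo 0 (V Real.pi), 0 < ψ β) ∧
    (∀ β ∈ Set.Ioo 0 (V Real.pi), ContDiffAt ℝ 2 ψ β) ∧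
    (∀ β ∈ Set.Ioo 0 (V Real.pi), -(deriv (deriv ψ) β) * ψ β
      = ((n : ℝ) - 1) * (1 + (deriv ψ β / ((n : ℝ) - 1)) ^ 2)) := by
  obtain ⟨F, hF, hFd⟩ := antideriv_sin_pow (n - 1)
  set m := n - 1 with hmdef
  have hm1 : 1 ≤ m := by omega
  have hmR : (m : ℝ) = (n : ℝ) - 1 := by
    rw [hmdef, Nat.cast_sub (by omega)]; norm_num
  have hmpos : (0:ℝ) < (m:ℝ) := by
    have h2n : (2:ℝ) ≤ n := by exact_mod_cast hn
    rw [hmR]; linarith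
  have hVF : V = fun r => c * (F r - F 0) := by
    funext r
    simp only [hV]
    congr 1
    exact intervalIntegral.integral_eq_sub_of_hasDerivAt (fun t _ => hFd t)
      ((Real.continuous_sin.pow _).intervalIntegrable _ _)
  have hVsmooth : ContDiff ℝ (⊤ : ℕ∞) V := by
    rw [hVF]; exact contDiff_const.mul (hF.sub contDiff_const)
  have hVd : ∀ r, HasDerivAt V (c * Real.sin r ^ m) r := fun r => by
    rw [hVF]; exact ((hFd r).sub_const (F 0)).const_mul c
  have hsin : ∀ r ∈ Set.Ioo (0:ℝ) π, 0 < Real.sin r := fun r hr =>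
    Real.sin_pos_of_pos_of_lt_pi hr.1 hr.2
  have hVpos : ∀ r ∈ Set.Ioo (0:ℝ) π, 0 < c * Real.sin r ^ m := fun r hr =>
    mul_pos hc (pow_pos (hsin r hr) _)
  have hmonoIcc : StrictMonoOn V (Set.Icc 0 π) := by
    apply strictMonoOn_of_deriv_pos (convex_Icc 0 π) hVsmooth.continuous.continuousOn
    intro x hx
    rw [interior_Icc] at hx
    rw [(hVd x).deriv]
    exact hVpos x hx
  have hV0 : V 0 = 0 := by rw [hV]; simp
  have hIccmem : ∀ r ∈ Set.Ioo (0:ℝ) π, r ∈ Set.Icc (0:ℝ) π := fun r hr =>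
    ⟨le_of_lt hr.1, le_of_lt hr.2⟩
  have h0Icc : (0:ℝ) ∈ Set.Icc (0:ℝ) π := ⟨le_refl _, le_of_lt Real.pi_pos⟩
  have hπIcc : π ∈ Set.Icc (0:ℝ) π := ⟨le_of_lt Real.pi_pos, le_refl _⟩
  have himage : V '' Set.Ioo 0 π = Set.Ioo 0 (V π) := by
    apply Set.Subset.antisymm
    · rintro _ ⟨r, hr, rfl⟩
      exact ⟨hV0 ▸ hmonoIcc h0Icc (hIccmem r hr) hr.1, hmonoIcc (hIccmem r hr) hπIcc hr.2⟩
    · have h := intermediate_value_Ioo (le_of_lt Real.pi_pos) hVsmooth.continuous.continuousOn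
      rwa [hV0] at h
  -- key local analysis
  have key : ∀ r₀ ∈ Set.Ioo (0:ℝ) π, ContDiffAt ℝ 2 ψ (V r₀) ∧
      deriv ψ (V r₀) = (m:ℝ) * (Real.cos r₀ / Real.sin r₀) ∧
      deriv (deriv ψ) (V r₀) * (c * Real.sin r₀ ^ m) = -(m:ℝ) / Real.sin r₀ ^ 2 := by
    intro r₀ hr₀
    have hs0 : Real.sin r₀ ≠ 0 := ne_of_gt (hsin r₀ hr₀)
    have hk0 : c * Real.sin r₀ ^ m ≠ 0 := ne_of_gt (hVpos r₀ hr₀)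
    have hVc : ContDiffAt ℝ 2 V r₀ := hVsmooth.contDiffAt.of_le (by exact WithTop.coe_le_coe.mpr le_top)
    have hfd : HasFDerivAt V
        ((ContinuousLinearEquiv.unitsEquivAut ℝ (Units.mk0 _ hk0) : ℝ ≃L[ℝ] ℝ) : ℝ →L[ℝ] ℝ) r₀ :=
      (hVd r₀).hasFDerivAt_equiv hk0
    have h12 : (2 : WithTop ℕ∞) ≠ 0 := two_ne_zero
    set g : ℝ → ℝ := hVc.localInverse hfd h12 with hgdef
    have hS := hVc.hasStrictFDerivAt' hfd h12
    have hg2 : ContDiffAt ℝ 2 g (V r₀) := hVc.to_localInverse hfd h12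
    have hrg : ∀ᶠ β in nhds (V r₀), V (g β) = β := hS.eventually_right_inverse
    have hg0 : g (V r₀) = r₀ := hS.localInverse_apply_image
    have hgcont : ContinuousAt g (V r₀) := hS.localInverse_continuousAt
    have hgmem : ∀ᶠ β in nhds (V r₀), g β ∈ Set.Ioo (0:ℝ) π :=
      hgcont.eventually_mem (by rw [hg0]; exact isOpen_Ioo.mem_nhds hr₀)
    have hψA : ψ =ᶠ[nhds (V r₀)] fun β => A (g β) := by
      filter_upwards [hgmem, hrg] with β h1 h2
      conv_lhs => rw [← h2]
      exact hψ _ h1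
    have hg2' : ∀ᶠ β in nhds (V r₀), ContDiffAt ℝ 2 g β := hg2.eventually (by norm_num)
    have hAd : ∀ r, HasDerivAt A (c * (((m:ℕ):ℝ) * Real.sin r ^ (m-1) * Real.cos r)) r := fun r => by
      rw [hA]; exact ((Real.hasDerivAt_sin r).pow m).const_mul c
    have hAsmooth : ContDiff ℝ (⊤ : ℕ∞) A := by rw [hA]; exact contDiff_const.mul (Real.contDiff_sin.pow _)
    have hψc : ContDiffAt ℝ 2 ψ (V r₀) := by
      refine ContDiffAt.congr_of_eventuallyEq ?_ hψA
      exact ((hAsmooth.contDiffAt.of_le (by exact WithTop.coe_le_coe.mpr le_top)).comp _ hg2)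
    refine ⟨hψc, ?_⟩
    -- step 1 : eventual first derivative
    have hstep1 : ∀ᶠ β in nhds (V r₀), deriv ψ β = (m:ℝ) * (Real.cos (g β) / Real.sin (g β)) := by
      filter_upwards [hgmem, hg2', hrg.eventually_nhds, hψA.eventually_nhds] with β hmem hgc hrloc hψloc
      have hgd : DifferentiableAt ℝ g β := hgc.differentiableAt two_ne_zero
      have hgd' : HasDerivAt g (deriv g β) β := hgd.hasDerivAt
      set dg := deriv g β with hdg
      have hcomp : HasDerivAt (fun b => V (g b)) (c * Real.sin (g β) ^ m * dg) β :=
        (hVd (g β)).comp β hgd'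
      have hid : HasDerivAt (fun b => V (g b)) 1 β :=
        (hasDerivAt_id β).congr_of_eventuallyEq hrloc
      have hkdg : c * Real.sin (g β) ^ m * dg = 1 := hcomp.unique hid
      have hderivψ : deriv ψ β = deriv (fun b => A (g b)) β := Filter.EventuallyEq.deriv_eq hψloc
      have hAg : HasDerivAt (fun b => A (g b))
          (c * (((m:ℕ):ℝ) * Real.sin (g β) ^ (m-1) * Real.cos (g β)) * dg) β :=
        (hAd (g β)).comp β hgd'
      rw [hderivψ, hAg.deriv]
      have hsβ : Real.sin (g β) ≠ 0 := ne_of_gt (hsin _ hmem)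
      have hms : Real.sin (g β) ^ m = Real.sin (g β) ^ (m-1) * Real.sin (g β) := by
        rw [← pow_succ]; congr 1; omega
      rw [hms] at hkdg
      field_simp
      linear_combination (Real.cos (g β)) * hkdg
    constructor
    · have h := hstep1.self_of_nhds
      rwa [hg0] at h
    -- step 2 : second derivative
    · have hgd : DifferentiableAt ℝ g (V r₀) := hg2.differentiableAt two_ne_zero
      have hgd' : HasDerivAt g (deriv g (V r₀)) (V r₀) := hgd.hasDerivAt
      set dg := deriv g (V r₀) with hdg
      have hcomp : HasDerivAt (fun b => V (g b)) (c * Real.sin r₀ ^ m * dg) (V r₀) := by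
        have := (hVd (g (V r₀))).comp (V r₀) hgd'
        rwa [hg0] at this
      have hid : HasDerivAt (fun b => V (g b)) 1 (V r₀) :=
        (hasDerivAt_id (V r₀)).congr_of_eventuallyEq hrg
      have hkdg : c * Real.sin r₀ ^ m * dg = 1 := hcomp.unique hid
      have hD2 : deriv (deriv ψ) (V r₀) =
          deriv (fun β => (m:ℝ) * (Real.cos (g β) / Real.sin (g β))) (V r₀) :=
        Filter.EventuallyEq.deriv_eq hstep1
      have hcosg : HasDerivAt (fun β => Real.cos (g β)) (-Real.sin r₀ * dg) (V r₀) := by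
        have := (Real.hasDerivAt_cos (g (V r₀))).comp (V r₀) hgd'
        rwa [hg0] at this
      have hsing : HasDerivAt (fun β => Real.sin (g β)) (Real.cos r₀ * dg) (V r₀) := by
        have := (Real.hasDerivAt_sin (g (V r₀))).comp (V r₀) hgd'
        rwa [hg0] at this
      have hsg0 : (fun β => Real.sin (g β)) (V r₀) ≠ 0 := by simpa [hg0] using hs0
      have hquot : HasDerivAt (fun β => (m:ℝ) * (Real.cos (g β) / Real.sin (g β)))
          ((m:ℝ) * ((-Real.sin r₀ * dg * Real.sin (g (V r₀)) -
            Real.cos (g (V r₀)) * (Real.cos r₀ * dg)) / Real.sin (g (V r₀)) ^ 2)) (V r₀) :=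
        (hcosg.div hsing hsg0).const_mul _
      rw [hD2, hquot.deriv, hg0]
      have hpyth : Real.sin r₀ ^ 2 + Real.cos r₀ ^ 2 = 1 := Real.sin_sq_add_cos_sq r₀
      field_simp
      linear_combination (-c * Real.sin r₀ ^ m * dg) * hpyth - hkdg
  -- assemble
  refine ⟨hVsmooth.contDiffOn, hmonoIcc.mono (fun r hr => hIccmem r hr), himage, ?_, ?_, ?_⟩
  · intro β hβ
    obtain ⟨r, hr, rfl⟩ := himage ▸ hβ
    rw [hψ r hr, hA]
    exact hVpos r hr
  · intro β hβ
    obtain ⟨r, hr, rfl⟩ := himage ▸ hβ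
    exact (key r hr).1
  · intro β hβ
    obtain ⟨r, hr, rfl⟩ := himage ▸ hβ
    obtain ⟨-, h1, h2⟩ := key r hr
    have hs0 : Real.sin r ≠ 0 := ne_of_gt (hsin r hr)
    have hψval : ψ (V r) = c * Real.sin r ^ m := by rw [hψ r hr, hA]
    have hk0 : c * Real.sin r ^ m ≠ 0 := ne_of_gt (hVpos r hr)
    have hD2 : deriv (deriv ψ) (V r) = -(m:ℝ) / Real.sin r ^ 2 / (c * Real.sin r ^ m) :=
      (eq_div_iff hk0).mpr h2
    rw [hψval, h1, hD2, ← hmR]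
    have hmne : (m:ℝ) ≠ 0 := ne_of_gt hmpos
    have hpyth : Real.sin r ^ 2 + Real.cos r ^ 2 = 1 := Real.sin_sq_add_cos_sq r
    field_simp
    linear_combination (-1) * hpyth
end

section
/- Let n ≥ 2 be an integer and set c = ( ∫₀^π (sin t)^{n−1} dt )^{−1} and γ_n = ∫_{−π/2}^{π/2} (cos t)^{n−1} dt. Define V(r) = c ∫₀^r (sin t)^{n−1} dt and A(r) = c (sin r)^{n−1} for r ∈ (0, π), so that V is a diffeomorphism from (0,π) onto (0,1), and let ψ = A ∘ V^{−1} : (0,1) → ℝ. Then ψ(β) (1 + (ψ'(β)/(n−1))²)^{(n−1)/2} = 1/γ_n for all β ∈ (0,1). -/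
/-!
Write `V r = c ∫₀^r sin^k` and `A r = c sin^k r` with `k = n - 1`. Since `V' = A` and
`A' = k c sin^(k-1) cos`, the inverse function theorem gives `ψ'(V r) = A'(r) / V'(r) = k cot r`.
Hence `1 + (ψ'/k)² = 1 / sin² r`, and `ψ (1 + (ψ'/k)²)^(k/2) = c sin^k r / sin^k r = c`.
Finally `c = 1/γ`, because shifting by `π/2` turns `∫_{-π/2}^{π/2} cos^k` into `∫₀^π sin^k`.
-/

open Real Filter Topology Set

theorem integral_comp_cos_eq_integral_comp_sin (f : ℝ → ℝ) :
    ∫ t in -(π / 2)..π / 2, f (cos t) = ∫ t in (0 : ℝ)..π, f (sin t) := by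
  have hshift := intervalIntegral.integral_comp_add_right (fun t => f (sin t)) (π / 2)
    (a := -(π / 2)) (b := π / 2)
  simp only [sin_add_pi_div_two] at hshift
  rw [hshift]
  congr 1 <;> ring

theorem HasStrictDerivAt.hasDerivAt_of_eventually_comp_eq {𝕜 : Type*}
    [NontriviallyNormedField 𝕜] [CompleteSpace 𝕜] {f g h : 𝕜 → 𝕜} {f' g' a : 𝕜}
    (hf : HasStrictDerivAt f f' a) (hf' : f' ≠ 0) (hg : HasDerivAt g g' a)
    (hcomp : ∀ᶠ x in 𝓝 a, h (f x) = g x) : HasDerivAt h (g' / f') (f a) := by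
  set u := hf.localInverse f f' a hf'
  have hleft : ∀ᶠ x in 𝓝 a, u (f x) = x := hf.eventually_left_inverse hf'
  have hh : h =ᶠ[𝓝 (f a)] g ∘ u := by
    rw [← hf.map_nhds_eq hf', EventuallyEq, eventually_map]
    filter_upwards [hcomp, hleft] with x hx hux
    simp only [Function.comp_apply, hux, hx]
  have hg' : HasDerivAt g g' (u (f a)) := by rwa [hleft.self_of_nhds]
  rw [div_eq_mul_inv]
  exact (hg'.comp (f a) (hf.to_localInverse hf').hasDerivAt).congr_of_eventuallyEq hh

theorem hasDerivAt_of_comp_integral_sin_pow {k : ℕ} {c : ℝ} (hc : c ≠ 0) {ψ : ℝ → ℝ}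
    (hψ : ∀ r ∈ Ioo 0 π, ψ (c * ∫ t in (0 : ℝ)..r, sin t ^ k) = c * sin r ^ k)
    {r : ℝ} (hr : r ∈ Ioo 0 π) :
    HasDerivAt ψ (k * (cos r / sin r)) (c * ∫ t in (0 : ℝ)..r, sin t ^ k) := by
  have hsin : sin r ≠ 0 := (sin_pos_of_pos_of_lt_pi hr.1 hr.2).ne'
  have hV : HasStrictDerivAt (fun r => c * ∫ t in (0 : ℝ)..r, sin t ^ k) (c * sin r ^ k) r :=
    ((continuous_sin.pow k).integral_hasStrictDerivAt 0 r).const_mul c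
  have hA : HasDerivAt (fun s => c * sin s ^ k) (c * (k * sin r ^ (k - 1) * cos r)) r :=
    ((hasDerivAt_sin r).pow k).const_mul c
  have hcomp : ∀ᶠ s in 𝓝 r,
      ψ (c * ∫ t in (0 : ℝ)..s, sin t ^ k) = c * sin s ^ k :=
    eventually_of_mem (isOpen_Ioo.mem_nhds hr) hψ
  refine (hV.hasDerivAt_of_eventually_comp_eq (by positivity) hA hcomp).congr_deriv ?_
  rcases k with _ | k
  · simp
  · rw [Nat.add_sub_cancel, pow_succ]
    field_simp

theorem rpow_mul_one_add_div_sq_rpow {x : ℝ} (hx : 0 < x) (y k : ℝ) :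
    x ^ k * (1 + (y / x) ^ 2) ^ (k / 2) = (x ^ 2 + y ^ 2) ^ (k / 2) := by
  have hxk : x ^ k = (x ^ 2) ^ (k / 2) := by
    rw [← rpow_natCast, ← rpow_mul hx.le]
    ring_nf
  rw [hxk, ← mul_rpow (by positivity) (by positivity)]
  congr 1
  field_simp

theorem model_profile_first_order_equation
    (n : ℕ) (hn : 2 ≤ n) (c γ : ℝ)
    (hc : c = (∫ t in (0 : ℝ)..Real.pi, (Real.sin t) ^ (n - 1))⁻¹)
    (hγ : γ = ∫ t in (-(Real.pi / 2))..(Real.pi / 2), (Real.cos t) ^ (n - 1))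
    (V A ψ : ℝ → ℝ)
    (hV : V = fun r => c * ∫ t in (0 : ℝ)..r, (Real.sin t) ^ (n - 1))
    (hA : A = fun r => c * (Real.sin r) ^ (n - 1))
    (hψ : ∀ r ∈ Set.Ioo (0 : ℝ) Real.pi, ψ (V r) = A r) :
    ∀ β ∈ Set.Ioo (0 : ℝ) 1,
      ψ β * (1 + (deriv ψ β / ((n : ℝ) - 1)) ^ 2) ^ (((n : ℝ) - 1) / 2) = 1 / γ := by
  subst hV hA
  intro β hβ
  have hI := integral_sin_pow_pos (n := n - 1)
  have hγI : γ = ∫ t in (0 : ℝ)..π, sin t ^ (n - 1) :=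
    hγ.trans (integral_comp_cos_eq_integral_comp_sin (· ^ (n - 1)))
  have hcI : c * ∫ t in (0 : ℝ)..π, sin t ^ (n - 1) = 1 := by
    rw [hc]
    exact inv_mul_cancel₀ hI.ne'
  obtain ⟨r, hr, rfl⟩ : β ∈ (fun r => c * ∫ t in (0 : ℝ)..r, sin t ^ (n - 1)) '' Ioo 0 π := by
    have hcont : Continuous fun r => c * ∫ t in (0 : ℝ)..r, sin t ^ (n - 1) :=
      continuous_const.mul (intervalIntegral.continuous_primitive
        (fun _ _ => (continuous_sin.pow _).intervalIntegrable _ _) 0)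
    have hivt := intermediate_value_Ioo pi_pos.le hcont.continuousOn
    simp only [intervalIntegral.integral_same, mul_zero, hcI] at hivt
    exact hivt hβ
  have hsin := sin_pos_of_pos_of_lt_pi hr.1 hr.2
  have hk : ((n - 1 : ℕ) : ℝ) = n - 1 := by
    rw [Nat.cast_sub (by omega), Nat.cast_one]
  have hk0 : (n : ℝ) - 1 ≠ 0 := by
    rw [← hk]
    exact_mod_cast (by omega : n - 1 ≠ 0)
  rw [(hasDerivAt_of_comp_integral_sin_pow (hc ▸ inv_ne_zero hI.ne') hψ hr).deriv, hψ r hr,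
    hk, mul_div_cancel_left₀ _ hk0, mul_assoc, ← hk, ← rpow_natCast,
    rpow_mul_one_add_div_sq_rpow hsin, sin_sq_add_cos_sq, one_rpow, mul_one, hc, hγI, one_div]
end
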